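/- Fix an integer n > 2, α ∈ (0,1] and β ∈ (0,1). In the non-stationary crowdsourcing model, let â^β_i(t) = Σ_{s=1}^t (β(1−β)^{t−s} / ((n−1)α²)) Σ_{j≠i} 1{X_i(s) X_j(s) = 1}. Then for every t ≥ 1 and every ε ≥ 0: P( max_{i=1,…,n} | â^β_i(t) − E[â^β_i(t)] | ≥ ε ) ≤ 2n · exp( −2 ε² α⁴ / β ). -/

import Mathlib

open MeasureTheory Finset
open scoped Classical

/-- Probability of `(G(t), X(t)) = (g, x)` for one task with error probabilities `p`:
`G(t)` is uniform on `{+1,−1}` and, given `G(t) = g`, the labels are independent with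
`X_i(t) = g` w.p. `α(1−p_i)`, `X_i(t) = −g` w.p. `α p_i`, `X_i(t) = 0` w.p. `1−α`. -/
noncomputable def taskScore (n : ℕ) (α : ℝ) (p : Fin n → ℝ) (g : ℤ) (x : Fin n → ℤ) : ℝ :=
  (1 / 2 : ℝ) * ∏ i, (if x i = g then α * (1 - p i) else if x i = -g then α * p i else 1 - α)

/-- Exponentially weighted estimate `â^β_i(t)` of the agreement rate of labeller `i`,
with averaging parameter `β`. -/
noncomputable def abeta {Ω : Type*} (n : ℕ) (α β : ℝ) (X : ℕ → Fin n → Ω → ℤ)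
    (t : ℕ) (i : Fin n) (ω : Ω) : ℝ :=
  ∑ s ∈ Finset.Icc 1 t, (β * (1 - β) ^ (t - s) / (((n : ℝ) - 1) * α ^ 2)) *
    ∑ j ∈ Finset.univ.erase i, (if X s i ω * X s j ω = 1 then (1 : ℝ) else 0)

/-!
The label vectors of distinct tasks are independent: on atoms their joint law is the product
of the per-task laws, and for countably-valued variables this identifies the joint law with the
product measure. For a fixed labeller `i`, `â^β_i(t)` is therefore a sum of independent terms,
the `s`-th one lying in `[0, β(1-β)^(t-s)/α²]`, so Hoeffding's inequality bounds each of its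
two tails by `exp(-2ε²α⁴ / Σ_s β²(1-β)^(2(t-s)))` and the geometric sum is at most `β`.
A union bound over the two tails and the `n` labellers gives the factor `2n`.
-/

open ProbabilityTheory

section

variable {Ω : Type*} [MeasurableSpace Ω] {μ : Measure Ω} [IsProbabilityMeasure μ]

theorem iIndepFun_of_measure_eq_prod {ι : Type*} [Fintype ι] {β : ι → Type*}
    [∀ i, MeasurableSpace (β i)] [∀ i, MeasurableSingletonClass (β i)] [∀ i, Countable (β i)]
    {W : ∀ i, Ω → β i} (hW : ∀ i, Measurable (W i))
    (ν : ∀ i, Measure (β i)) [∀ i, IsProbabilityMeasure (ν i)]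
    (h : ∀ x : ∀ i, β i, μ {ω | ∀ i, W i ω = x i} = ∏ i, ν i {x i}) :
    iIndepFun W μ := by
  have hWvec : Measurable fun ω i => W i ω := measurable_pi_lambda _ hW
  have hjoint : μ.map (fun ω i => W i ω) = Measure.pi ν := by
    refine Measure.ext_of_singleton fun x => ?_
    rw [Measure.map_apply hWvec (measurableSet_singleton x), ← Set.univ_pi_singleton,
      Measure.pi_pi, ← h x]
    congr 1
    ext ω
    simp
  have hmarginal : ∀ i, μ.map (W i) = ν i := fun i => by
    rw [show W i = Function.eval i ∘ fun ω i => W i ω from rfl,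
      ← Measure.map_map (measurable_pi_apply i) hWvec, hjoint, Measure.pi_map_eval]
    simp
  rw [iIndepFun_iff_map_fun_eq_pi_map fun i => (hW i).aemeasurable, hjoint]
  simp_rw [hmarginal]

theorem measureReal_abs_sum_sub_integral_ge_le {ι : Type*} [Fintype ι] {Y : ι → Ω → ℝ}
    (h_indep : iIndepFun Y μ) (hY : ∀ i, Measurable (Y i)) {a b : ι → ℝ}
    (hab : ∀ i ω, Y i ω ∈ Set.Icc (a i) (b i)) {ε : ℝ} (hε : 0 ≤ ε) :
    μ.real {ω | ε ≤ |∑ i, Y i ω - μ[fun ω => ∑ i, Y i ω]|} ≤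
      2 * Real.exp (-2 * ε ^ 2 / ∑ i, (b i - a i) ^ 2) := by
  have hint : ∀ i, Integrable (Y i) μ := fun i =>
    Integrable.of_mem_Icc (a i) (b i) (hY i).aemeasurable (ae_of_all _ (hab i))
  set Z : ι → Ω → ℝ := fun i ω => Y i ω - μ[Y i]
  have hZ : ∀ i, HasSubgaussianMGF (Z i) ((‖b i - a i‖₊ / 2) ^ 2) μ := fun i =>
    hasSubgaussianMGF_of_mem_Icc (hY i).aemeasurable (ae_of_all _ (hab i))
  have hZ_indep : iIndepFun Z μ :=
    h_indep.comp (fun i (x : ℝ) => x - ∫ ω, Y i ω ∂μ) fun i => by fun_prop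
  have hnegZ_indep : iIndepFun (fun i => -Z i) μ :=
    h_indep.comp (fun i (x : ℝ) => -(x - ∫ ω, Y i ω ∂μ)) fun i => by fun_prop
  have hsum : ∀ ω, ∑ i, Y i ω - μ[fun ω => ∑ i, Y i ω] = ∑ i, Z i ω := fun ω => by
    rw [integral_finsetSum _ fun i _ => hint i, ← Finset.sum_sub_distrib]
  have hexp : -ε ^ 2 / (2 * ∑ i, ((‖b i - a i‖₊ / 2) ^ 2 : NNReal)) =
      -2 * ε ^ 2 / ∑ i, (b i - a i) ^ 2 := by
    push_cast
    simp only [Real.norm_eq_abs, div_pow, sq_abs, ← Finset.sum_div]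
    ring
  have hupper := HasSubgaussianMGF.measure_sum_ge_le_of_iIndepFun hZ_indep (s := Finset.univ)
    (fun i _ => hZ i) hε
  have hlower := HasSubgaussianMGF.measure_sum_ge_le_of_iIndepFun hnegZ_indep (s := Finset.univ)
    (fun i _ => (hZ i).neg) hε
  rw [hexp] at hupper hlower
  calc μ.real {ω | ε ≤ |∑ i, Y i ω - μ[fun ω => ∑ i, Y i ω]|}
      ≤ μ.real ({ω | ε ≤ ∑ i, Z i ω} ∪ {ω | ε ≤ ∑ i, (-Z i) ω}) := by
        refine measureReal_mono (fun ω hω => ?_)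
        simp only [Set.mem_union, Set.mem_ofPred_eq, hsum, Pi.neg_apply,
          Finset.sum_neg_distrib] at hω ⊢
        exact le_abs.1 hω
    _ ≤ _ := (measureReal_union_le _ _).trans (by linarith)

end

section TaskLaw

variable (n : ℕ) (α : ℝ) (p : Fin n → ℝ)

def taskSupport : Finset (ℤ × (Fin n → ℤ)) :=
  {1, -1} ×ˢ Fintype.piFinset fun _ => {-1, 0, 1}

variable {n} in
theorem mem_taskSupport {v : ℤ × (Fin n → ℤ)} :
    v ∈ taskSupport n ↔ (v.1 = 1 ∨ v.1 = -1) ∧ ∀ i, v.2 i = -1 ∨ v.2 i = 0 ∨ v.2 i = 1 := by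
  simp [taskSupport]

theorem sum_taskScore : ∑ v ∈ taskSupport n, taskScore n α p v.1 v.2 = 1 := by
  have hlabels : ∀ g : ℤ, g = 1 ∨ g = -1 →
      ∑ x ∈ Fintype.piFinset fun _ : Fin n => ({-1, 0, 1} : Finset ℤ),
        ∏ i, (if x i = g then α * (1 - p i) else if x i = -g then α * p i else 1 - α) = 1 := by
    intro g hg
    rw [Finset.sum_prod_piFinset _
      fun i z => if z = g then α * (1 - p i) else if z = -g then α * p i else 1 - α]
    refine Finset.prod_eq_one fun i _ => ?_
    rcases hg with rfl | rfl <;> norm_num <;> ring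
  simp only [taskSupport, taskScore, Finset.sum_product, ← Finset.mul_sum]
  rw [Finset.sum_pair (by decide), hlabels 1 (Or.inl rfl), hlabels (-1) (Or.inr rfl)]
  norm_num

variable {n α p} in
theorem taskScore_nonneg (hα : α ∈ Set.Icc 0 1) (hp : ∀ i, p i ∈ Set.Icc 0 1) (g : ℤ)
    (x : Fin n → ℤ) : 0 ≤ taskScore n α p g x := by
  obtain ⟨hα0, hα1⟩ := hα
  refine mul_nonneg (by norm_num) (Finset.prod_nonneg fun i _ => ?_)
  obtain ⟨hp0, hp1⟩ := hp i
  split_ifs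
  · exact mul_nonneg hα0 (sub_nonneg.2 hp1)
  · exact mul_nonneg hα0 hp0
  · exact sub_nonneg.2 hα1

noncomputable def taskLaw : Measure (ℤ × (Fin n → ℤ)) :=
  ∑ v ∈ taskSupport n, ENNReal.ofReal (taskScore n α p v.1 v.2) • Measure.dirac v

theorem taskLaw_singleton (v : ℤ × (Fin n → ℤ)) :
    taskLaw n α p {v} =
      if v ∈ taskSupport n then ENNReal.ofReal (taskScore n α p v.1 v.2) else 0 := by
  simp [taskLaw, Measure.dirac_apply', Set.indicator, Finset.sum_ite_eq']

variable {n α p} in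
theorem isProbabilityMeasure_taskLaw (hα : α ∈ Set.Icc 0 1) (hp : ∀ i, p i ∈ Set.Icc 0 1) :
    IsProbabilityMeasure (taskLaw n α p) := by
  constructor
  simp only [taskLaw, Measure.coe_finsetSum, Finset.sum_apply, Measure.smul_apply,
    measure_univ, smul_eq_mul, mul_one]
  rw [← ENNReal.ofReal_sum_of_nonneg fun v _ => taskScore_nonneg hα hp v.1 v.2,
    sum_taskScore, ENNReal.ofReal_one]

end TaskLaw

section Tasks

variable {Ω : Type*} [MeasurableSpace Ω] {μ : Measure Ω} [IsProbabilityMeasure μ]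
  {n : ℕ} {α : ℝ} {p : ℕ → Fin n → ℝ} {G : ℕ → Ω → ℤ} {X : ℕ → Fin n → Ω → ℤ}

theorem iIndepFun_tasks (hα : α ∈ Set.Icc 0 1) (hp : ∀ s i, p s i ∈ Set.Icc 0 1)
    (hGmeas : ∀ s, Measurable (G s)) (hXmeas : ∀ s i, Measurable (X s i))
    (hGval : ∀ s ω, G s ω = 1 ∨ G s ω = -1)
    (hXval : ∀ s i ω, X s i ω = -1 ∨ X s i ω = 0 ∨ X s i ω = 1)
    (hlaw : ∀ (T : ℕ) (g : ℕ → ℤ) (x : ℕ → Fin n → ℤ),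
      (∀ s, g s = 1 ∨ g s = -1) → (∀ s i, x s i = -1 ∨ x s i = 0 ∨ x s i = 1) →
      μ {ω | ∀ s ∈ Finset.Icc 1 T, (G s ω = g s ∧ ∀ i, X s i ω = x s i)} =
        ENNReal.ofReal (∏ s ∈ Finset.Icc 1 T, taskScore n α (p s) (g s) (x s)))
    (t : ℕ) :
    iIndepFun (fun (s : Finset.Icc 1 t) ω => (G s ω, fun i => X s i ω)) μ := by
  have := fun s => isProbabilityMeasure_taskLaw hα (hp s)
  refine iIndepFun_of_measure_eq_prod
    (fun s => (hGmeas s).prodMk (measurable_pi_lambda _ fun i => hXmeas s i))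
    (fun s => taskLaw n α (p s)) fun x => ?_
  by_cases hx : ∀ s, x s ∈ taskSupport n
  · set xe : ℕ → ℤ × (Fin n → ℤ) :=
      fun s => if hs : s ∈ Finset.Icc 1 t then x ⟨s, hs⟩ else (1, 0)
    have hxe : ∀ s, xe s ∈ taskSupport n := fun s => by
      unfold xe
      split_ifs
      · exact hx _
      · simp [mem_taskSupport]
    convert hlaw t (fun s => (xe s).1) (fun s => (xe s).2)
      (fun s => (mem_taskSupport.1 (hxe s)).1) (fun s => (mem_taskSupport.1 (hxe s)).2) using 1
    · congr 1
      ext ω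
      simp only [Set.mem_ofPred_eq, Subtype.forall]
      refine forall₂_congr fun s hs => ?_
      rw [show xe s = x ⟨s, hs⟩ from dif_pos hs]
      simp [Prod.ext_iff, funext_iff]
    · rw [ENNReal.ofReal_prod_of_nonneg fun s _ => taskScore_nonneg hα (hp s) _ _,
        ← Finset.prod_coe_sort (Finset.Icc 1 t)]
      refine Finset.prod_congr rfl fun s _ => ?_
      rw [taskLaw_singleton, if_pos (hx s), show xe s = x s from dif_pos s.2]
  · push Not at hx
    obtain ⟨s₀, hs₀⟩ := hx
    rw [Finset.prod_eq_zero (Finset.mem_univ s₀) (by rw [taskLaw_singleton, if_neg hs₀])]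
    refine measure_mono_null (fun ω hω => ?_) measure_empty
    exact hs₀ (hω s₀ ▸ mem_taskSupport.2 ⟨hGval s₀ ω, fun i => hXval s₀ i ω⟩)

end Tasks

theorem sum_Icc_sq_mul_pow_sub_le {β : ℝ} (hβ0 : 0 ≤ β) (hβ1 : β ≤ 1) (t : ℕ) :
    ∑ s ∈ Finset.Icc 1 t, (β * (1 - β) ^ (t - s)) ^ 2 ≤ β := by
  have hreflect : ∑ s ∈ Finset.Icc 1 t, (β * (1 - β) ^ (t - s)) ^ 2 =
      ∑ k ∈ Finset.range t, (β * (1 - β) ^ k) ^ 2 :=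
    Finset.sum_nbij' (fun s => t - s) (fun k => t - k) (by simp only [mem_Icc, mem_range]; omega)
      (by simp only [mem_Icc, mem_range]; omega) (by simp only [mem_Icc]; omega)
      (by simp only [mem_range]; omega) (fun _ _ => rfl)
  have hgeom : β * ∑ k ∈ Finset.range t, (1 - β) ^ k = 1 - (1 - β) ^ t := by
    have := geom_sum_mul (1 - β) t
    linarith
  have hpow : ∀ k, (1 - β) ^ k ≤ 1 := fun k => pow_le_one₀ (by linarith) (by linarith)
  calc ∑ s ∈ Finset.Icc 1 t, (β * (1 - β) ^ (t - s)) ^ 2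
      = ∑ k ∈ Finset.range t, (β * (1 - β) ^ k) ^ 2 := hreflect
    _ ≤ ∑ k ∈ Finset.range t, β * (β * (1 - β) ^ k) := Finset.sum_le_sum fun k _ => by
        have := pow_nonneg (sub_nonneg.2 hβ1) k
        nlinarith [mul_nonneg (mul_nonneg (mul_nonneg hβ0 hβ0) this) (sub_nonneg.2 (hpow k))]
    _ = β * (1 - (1 - β) ^ t) := by rw [← hgeom, Finset.mul_sum, Finset.mul_sum]
    _ ≤ β := by nlinarith [pow_nonneg (sub_nonneg.2 hβ1) t]

section Labeller

variable {n : ℕ}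

noncomputable def agreementFraction (x : Fin n → ℤ) (i : Fin n) : ℝ :=
  (∑ j ∈ Finset.univ.erase i, if x i * x j = 1 then (1 : ℝ) else 0) / ((n : ℝ) - 1)

theorem agreementFraction_mem_Icc (x : Fin n → ℤ) (i : Fin n) :
    agreementFraction x i ∈ Set.Icc 0 1 := by
  have hn : (0 : ℝ) ≤ (n : ℝ) - 1 := sub_nonneg.2 (Nat.one_le_cast.2 i.pos)
  have hcount : ∑ j ∈ Finset.univ.erase i, (if x i * x j = 1 then (1 : ℝ) else 0) ≤ (n : ℝ) - 1 :=
    calc _ ≤ ∑ j ∈ Finset.univ.erase i, (1 : ℝ) :=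
          Finset.sum_le_sum fun j _ => by split_ifs <;> norm_num
      _ = (n : ℝ) - 1 := by
          simp [Finset.card_erase_of_mem, Nat.cast_sub (i.pos : 1 ≤ n)]
  exact ⟨div_nonneg (Finset.sum_nonneg fun j _ => by split_ifs <;> norm_num) hn,
    div_le_one_of_le₀ hcount hn⟩

theorem abeta_eq_sum_agreementFraction {Ω : Type*} (α β : ℝ) (X : ℕ → Fin n → Ω → ℤ) (t : ℕ)
    (i : Fin n) (ω : Ω) :
    abeta n α β X t i ω = ∑ s ∈ Finset.Icc 1 t,
      β * (1 - β) ^ (t - s) / α ^ 2 * agreementFraction (fun j => X s j ω) i :=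
  Finset.sum_congr rfl fun s _ => by
    rw [agreementFraction, div_mul_div_comm, div_mul_eq_mul_div, mul_comm (α ^ 2)]

end Labeller

theorem measureReal_abs_abeta_sub_integral_ge_le {Ω : Type*} [MeasurableSpace Ω]
    {μ : Measure Ω} [IsProbabilityMeasure μ] {n : ℕ} {α β : ℝ} {X : ℕ → Fin n → Ω → ℤ} {t : ℕ}
    (hα : 0 < α) (hβ0 : 0 < β) (hβ1 : β ≤ 1) (ht : 1 ≤ t) (hXmeas : ∀ s i, Measurable (X s i))
    (hindep : iIndepFun (fun (s : Finset.Icc 1 t) ω j => X s j ω) μ) (i : Fin n) {ε : ℝ}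
    (hε : 0 ≤ ε) :
    μ.real {ω | ε ≤ |abeta n α β X t i ω - ∫ ω', abeta n α β X t i ω' ∂μ|} ≤
      2 * Real.exp (-2 * ε ^ 2 * α ^ 4 / β) := by
  set w : ℕ → ℝ := fun s => β * (1 - β) ^ (t - s) / α ^ 2
  set Y : Finset.Icc 1 t → Ω → ℝ := fun s ω => w s * agreementFraction (fun j => X s j ω) i
  have hY_indep : iIndepFun Y μ :=
    hindep.comp (fun s x => w s * agreementFraction x i) fun _ => measurable_of_countable _
  have hY_meas : ∀ s, Measurable (Y s) := fun s =>
    (measurable_of_countable fun x : Fin n → ℤ => w s * agreementFraction x i).comp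
      (measurable_pi_lambda _ fun j => hXmeas s j)
  have hw : ∀ s : ℕ, 0 ≤ w s := fun s => by positivity
  have hY_mem : ∀ (s : Finset.Icc 1 t) ω, Y s ω ∈ Set.Icc 0 (w s) := fun s ω => by
    obtain ⟨h0, h1⟩ := agreementFraction_mem_Icc (fun j => X s j ω) i
    exact ⟨mul_nonneg (hw s) h0, mul_le_of_le_one_right (hw s) h1⟩
  have habeta : ∀ ω, abeta n α β X t i ω = ∑ s, Y s ω := fun ω => by
    rw [abeta_eq_sum_agreementFraction, ← Finset.sum_coe_sort]
  have hsum_sq : ∑ s : Finset.Icc 1 t, (w s - 0) ^ 2 = ∑ s ∈ Finset.Icc 1 t, w s ^ 2 := by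
    simp_rw [sub_zero]
    exact Finset.sum_coe_sort (Finset.Icc 1 t) fun s => w s ^ 2
  have hS_le : ∑ s ∈ Finset.Icc 1 t, w s ^ 2 ≤ β / α ^ 4 := by
    simp_rw [w, div_pow, ← pow_mul, ← Finset.sum_div]
    exact div_le_div_of_nonneg_right (sum_Icc_sq_mul_pow_sub_le hβ0.le hβ1 t) (by positivity)
  have hS_pos : 0 < ∑ s ∈ Finset.Icc 1 t, w s ^ 2 :=
    (pow_pos (by simp only [w, Nat.sub_self, pow_zero, mul_one]; positivity) 2).trans_le <|
      Finset.single_le_sum (fun s _ => sq_nonneg (w s)) (Finset.mem_Icc.2 ⟨ht, le_rfl⟩)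
  simp_rw [habeta]
  calc _ ≤ 2 * Real.exp (-2 * ε ^ 2 / ∑ s : Finset.Icc 1 t, (w s - 0) ^ 2) :=
        measureReal_abs_sum_sub_integral_ge_le hY_indep hY_meas hY_mem hε
    _ ≤ 2 * Real.exp (-2 * ε ^ 2 / (β / α ^ 4)) := by
        rw [hsum_sq, neg_mul, neg_div, neg_div]
        gcongr
    _ = 2 * Real.exp (-2 * ε ^ 2 * α ^ 4 / β) := by
        congr 2
        field_simp

theorem abeta_concentration_general
    {Ω : Type*} [MeasurableSpace Ω] (μ : Measure Ω) [IsProbabilityMeasure μ]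
    (n : ℕ) (α : ℝ) (hα : α ∈ Set.Ioc (0 : ℝ) 1)
    (β : ℝ) (hβ : β ∈ Set.Ioo (0 : ℝ) 1)
    (p : ℕ → Fin n → ℝ) (hp : ∀ t i, p t i ∈ Set.Icc (0 : ℝ) 1)
    (G : ℕ → Ω → ℤ) (X : ℕ → Fin n → Ω → ℤ)
    (hGmeas : ∀ s, Measurable (G s)) (hXmeas : ∀ s i, Measurable (X s i))
    (hGval : ∀ s ω, G s ω = 1 ∨ G s ω = -1)
    (hXval : ∀ s i ω, X s i ω = -1 ∨ X s i ω = 0 ∨ X s i ω = 1)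
    -- tasks are independent with the per-task law given by p(s) at time s:
    (hlaw : ∀ (T : ℕ) (g : ℕ → ℤ) (x : ℕ → Fin n → ℤ),
      (∀ s, g s = 1 ∨ g s = -1) → (∀ s i, x s i = -1 ∨ x s i = 0 ∨ x s i = 1) →
      μ {ω | ∀ s ∈ Finset.Icc 1 T, (G s ω = g s ∧ ∀ i, X s i ω = x s i)} =
        ENNReal.ofReal (∏ s ∈ Finset.Icc 1 T, taskScore n α (p s) (g s) (x s)))
    (t : ℕ) (ht : 1 ≤ t) (ε : ℝ) (hε : 0 ≤ ε) :
    μ {ω | ∃ i, ε ≤ |abeta n α β X t i ω - ∫ ω', abeta n α β X t i ω' ∂μ|}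
      ≤ ENNReal.ofReal (2 * (n : ℝ) * Real.exp (-2 * ε ^ 2 * α ^ 4 / β)) := by
  obtain ⟨hα0, hα1⟩ := hα
  obtain ⟨hβ0, hβ1⟩ := hβ
  have hindep : iIndepFun (fun (s : Finset.Icc 1 t) ω j => X s j ω) μ :=
    (iIndepFun_tasks ⟨hα0.le, hα1⟩ hp hGmeas hXmeas hGval hXval hlaw t).comp
      (fun _ => Prod.snd) fun _ => measurable_snd
  have htail := fun i =>
    measureReal_abs_abeta_sub_integral_ge_le hα0 hβ0 hβ1.le ht hXmeas hindep i hε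
  calc μ {ω | ∃ i, ε ≤ |abeta n α β X t i ω - ∫ ω', abeta n α β X t i ω' ∂μ|}
      ≤ ∑ i, μ {ω | ε ≤ |abeta n α β X t i ω - ∫ ω', abeta n α β X t i ω' ∂μ|} := by
        rw [Set.ofPred_exists]
        exact measure_iUnion_fintype_le _ _
    _ ≤ ∑ _i : Fin n, ENNReal.ofReal (2 * Real.exp (-2 * ε ^ 2 * α ^ 4 / β)) :=
        Finset.sum_le_sum fun i _ => by
          rw [← ofReal_measureReal]
          exact ENNReal.ofReal_le_ofReal (htail i)
    _ = ENNReal.ofReal (2 * (n : ℝ) * Real.exp (-2 * ε ^ 2 * α ^ 4 / β)) := by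
        rw [Finset.sum_const, Finset.card_univ, Fintype.card_fin, nsmul_eq_mul,
          ← ENNReal.ofReal_natCast, ← ENNReal.ofReal_mul (Nat.cast_nonneg n), ← mul_assoc,
          mul_comm (n : ℝ)]

/-- fluctuation bound: for every `ε ≥ 0`,
`P( max_i |â^β_i(t) − E[â^β_i(t)]| ≥ ε ) ≤ 2n exp(−2ε²α⁴/β)`. -/
theorem abeta_concentration
    {Ω : Type*} [MeasurableSpace Ω] (μ : Measure Ω) [IsProbabilityMeasure μ]
    (n : ℕ) (hn : 2 < n) (α : ℝ) (hα : α ∈ Set.Ioc (0 : ℝ) 1)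
    (β : ℝ) (hβ : β ∈ Set.Ioo (0 : ℝ) 1) (σ : ℝ) (hσ : 0 ≤ σ)
    (p : ℕ → Fin n → ℝ) (hp : ∀ t i, p t i ∈ Set.Icc (0 : ℝ) 1)
    -- the error probabilities vary at speed σ:
    (hspeed : ∀ (i : Fin n) (s t : ℕ), 1 ≤ s → 1 ≤ t →
      |p t i - p s i| ≤ σ * |(t : ℝ) - (s : ℝ)|)
    (G : ℕ → Ω → ℤ) (X : ℕ → Fin n → Ω → ℤ)
    (hGmeas : ∀ s, Measurable (G s)) (hXmeas : ∀ s i, Measurable (X s i))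
    (hGval : ∀ s ω, G s ω = 1 ∨ G s ω = -1)
    (hXval : ∀ s i ω, X s i ω = -1 ∨ X s i ω = 0 ∨ X s i ω = 1)
    -- tasks are independent with the per-task law given by p(s) at time s:
    (hlaw : ∀ (T : ℕ) (g : ℕ → ℤ) (x : ℕ → Fin n → ℤ),
      (∀ s, g s = 1 ∨ g s = -1) → (∀ s i, x s i = -1 ∨ x s i = 0 ∨ x s i = 1) →
      μ {ω | ∀ s ∈ Finset.Icc 1 T, (G s ω = g s ∧ ∀ i, X s i ω = x s i)} =
        ENNReal.ofReal (∏ s ∈ Finset.Icc 1 T, taskScore n α (p s) (g s) (x s)))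
    -- agreement rates at time t:
    (a : ℕ → Fin n → ℝ)
    (ha : ∀ t i, a t i = (1 / ((n : ℝ) - 1)) * ∑ j ∈ Finset.univ.erase i,
      (p t i * p t j + (1 - p t i) * (1 - p t j)))
    (t : ℕ) (ht : 1 ≤ t) (ε : ℝ) (hε : 0 ≤ ε) :
    μ {ω | ∃ i, ε ≤ |abeta n α β X t i ω - ∫ ω', abeta n α β X t i ω' ∂μ|}
      ≤ ENNReal.ofReal (2 * (n : ℝ) * Real.exp (-2 * ε ^ 2 * α ^ 4 / β)) :=
  abeta_concentration_general μ n α hα β hβ p hp G X hGmeas hXmeas hGval hXval hlaw t ht ε hε
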